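/- arXiv:1712.02528 — 2 statements merged into one kernel-verified Lean document; each statement's English description precedes it below -/
import Mathlib

section
/- Fix an integer r ≥ 2 and define, for g ≥ 0, n ≥ 1 with 2g−2+n > 0 and a_1, …, a_n ∈ {0, …, r−2}, the number ω_{g,n}(a_1, …, a_n) = (r/2)^{g−1} Σ_{k=1}^{r−1} (−1)^{(k−1)(g−1)} ∏_{i=1}^n sin((a_i+1)kπ/r) / sin(kπ/r)^{2g−2+n}. Then for all g ≥ 1 (with 2(g−1)−2+(n+2) > 0), ω_{g,n}(a_1, …, a_n) = Σ_{a=0}^{r−2} ω_{g−1, n+2}(a_1, …, a_n, a, r−2−a). -/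
/-!
For each `k`, the two new node insertions `sin((b+1)kπ/r)` and `sin((r-1-b)kπ/r)` differ only by
the sign `(-1)^(k+1)`, because `(r-1-b)kπ/r = kπ - (b+1)kπ/r`. That sign turns the parity factor
`(-1)^{(k-1)(g-2)}` into `(-1)^{(k-1)(g-1)}`, and summing the remaining `sin²((b+1)kπ/r)` over the
node label `b` gives `r/2`, the missing power of `r/2` in the prefactor.
-/

open Real Finset

/-- The topological part of the shifted `r`-spin CohFT (Proposition 3.6):
`ω_{g,n}(a_1,…,a_n) = (r/2)^{g−1} Σ_{k=1}^{r−1}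
  (−1)^{(k−1)(g−1)} ∏_i sin((a_i+1)kπ/r) / sin(kπ/r)^{2g−2+n}`. -/
noncomputable def omegaR (r : ℕ) (g : ℤ) (n : ℕ) (a : Fin n → ℕ) : ℝ :=
  ((r : ℝ) / 2) ^ (g - 1) * ∑ k ∈ Finset.Icc 1 (r - 1),
    (-1 : ℝ) ^ (((k : ℤ) - 1) * (g - 1)) *
      (∏ i, Real.sin ((a i + 1) * k * π / r)) /
        (Real.sin (k * π / r)) ^ (2 * g - 2 + n)

theorem sum_range_sin_sq_of_sin_mul_eq_zero {r : ℕ} {θ : ℝ} (hθ : sin θ ≠ 0)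
    (hrθ : sin (r * θ) = 0) :
    ∑ j ∈ range r, sin (j * θ) ^ 2 = r / 2 := by
  have hcos : ∑ j ∈ range r, cos (2 * θ * j + 0) = 0 := by
    have h := sin_mul_sum_cos r (2 * θ) 0
    rw [show (r : ℝ) * (2 * θ) / 2 = r * θ by ring, hrθ, zero_mul,
      show 2 * θ / 2 = θ by ring] at h
    exact (mul_eq_zero.mp h).resolve_left hθ
  calc ∑ j ∈ range r, sin (j * θ) ^ 2
      = ∑ j ∈ range r, (1 / 2 - cos (2 * θ * j + 0) / 2) := by
        refine sum_congr rfl fun j _ => ?_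
        rw [sin_sq_eq_half_sub]
        ring_nf
    _ = r / 2 := by
        rw [sum_sub_distrib, sum_const, card_range, nsmul_eq_mul, ← sum_div, hcos]
        ring

theorem sum_range_pred_sin_succ_sq_of_sin_mul_eq_zero {r : ℕ} {θ : ℝ} (hθ : sin θ ≠ 0)
    (hrθ : sin (r * θ) = 0) :
    ∑ b ∈ range (r - 1), sin ((b + 1) * θ) ^ 2 = r / 2 := by
  cases r with
  | zero => simp
  | succ s =>
    have h := sum_range_sin_sq_of_sin_mul_eq_zero hθ hrθ
    rw [sum_range_succ'] at h
    simpa using h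

theorem sin_sub_mul_nat_mul_pi_div {r : ℝ} (hr : r ≠ 0) (m : ℝ) (k : ℕ) :
    sin ((r - m) * k * π / r) = (-1) ^ (k + 1) * sin (m * k * π / r) := by
  rw [show (r - m) * k * π / r = k * π - m * k * π / r by field_simp, sin_nat_mul_pi_sub]
  ring

noncomputable def omegaSummand (r : ℕ) (g : ℤ) (n : ℕ) (a : Fin n → ℕ) (k : ℕ) : ℝ :=
  (-1 : ℝ) ^ (((k : ℤ) - 1) * (g - 1)) *
    (∏ i, sin ((a i + 1) * k * π / r)) / sin (k * π / r) ^ (2 * g - 2 + n)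

theorem omegaR_eq_sum_omegaSummand (r : ℕ) (g : ℤ) (n : ℕ) (a : Fin n → ℕ) :
    omegaR r g n a = ((r : ℝ) / 2) ^ (g - 1) * ∑ k ∈ Icc 1 (r - 1), omegaSummand r g n a k :=
  rfl

theorem omegaSummand_snoc_snoc {r : ℕ} {b : ℕ} (hb : b + 2 ≤ r) (g : ℤ) {n : ℕ}
    (a : Fin n → ℕ) (k : ℕ) :
    omegaSummand r (g - 1) (n + 2) (Fin.snoc (Fin.snoc a b) (r - 2 - b)) k =
      omegaSummand r g n a k * sin ((b + 1) * k * π / r) ^ 2 := by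
  have hreflect : sin ((((r - 2 - b : ℕ) : ℝ) + 1) * k * π / r) =
      (-1) ^ (k + 1) * sin ((b + 1) * k * π / r) := by
    rw [← sin_sub_mul_nat_mul_pi_div (by norm_cast; omega : (r : ℝ) ≠ 0)]
    congr 3
    push_cast [Nat.cast_sub (by omega : b ≤ r - 2), Nat.cast_sub (by omega : 2 ≤ r)]
    ring
  have hsign : (-1 : ℝ) ^ (((k : ℤ) - 1) * (g - 1 - 1)) * (-1) ^ (k + 1) =
      (-1) ^ (((k : ℤ) - 1) * (g - 1)) := by
    rw [← zpow_natCast, ← zpow_add₀ (by norm_num),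
      show ((k : ℤ) - 1) * (g - 1 - 1) + ((k + 1 : ℕ) : ℤ) = ((k : ℤ) - 1) * (g - 1) + 2 by
        push_cast; ring,
      zpow_add₀ (by norm_num)]
    norm_num
  simp only [omegaSummand, Fin.prod_univ_castSucc, Fin.snoc_castSucc, Fin.snoc_last,
    hreflect, ← hsign]
  rw [show 2 * (g - 1) - 2 + ((n + 2 : ℕ) : ℤ) = 2 * g - 2 + n by push_cast; ring]
  ring

theorem sum_omegaSummand_snoc_snoc {r k : ℕ} (hk : k ∈ Icc 1 (r - 1)) (g : ℤ) {n : ℕ}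
    (a : Fin n → ℕ) :
    ∑ b ∈ range (r - 1), omegaSummand r (g - 1) (n + 2) (Fin.snoc (Fin.snoc a b) (r - 2 - b)) k =
      omegaSummand r g n a k * (r / 2) := by
  obtain ⟨hk1, hkr⟩ := mem_Icc.mp hk
  have hr : (0 : ℝ) < r := by norm_cast; omega
  have hsin : sin (k * π / r) ≠ 0 := by
    refine (sin_pos_of_pos_of_lt_pi (by positivity) ?_).ne'
    rw [div_lt_iff₀ hr, mul_comm]
    exact mul_lt_mul_of_pos_left (by norm_cast; omega) pi_pos
  have hsin_r : sin (r * (k * π / r)) = 0 := by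
    rw [mul_div_cancel₀ _ hr.ne']
    exact sin_nat_mul_pi k
  rw [← sum_range_pred_sin_succ_sq_of_sin_mul_eq_zero hsin hsin_r, mul_sum]
  refine sum_congr rfl fun b hb => ?_
  rw [omegaSummand_snoc_snoc (by have := mem_range.mp hb; omega), mul_div_assoc]
  ring_nf

theorem stmt_3_general (r : ℕ) (hr : 2 ≤ r) (g : ℤ) (n : ℕ) (a : Fin n → ℕ) :
    omegaR r g n a =
      ∑ b ∈ Finset.range (r - 1),
        omegaR r (g - 1) (n + 2) (Fin.snoc (Fin.snoc a b) (r - 2 - b)) := by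
  have hr0 : (r : ℝ) / 2 ≠ 0 := div_ne_zero (by norm_cast; omega) two_ne_zero
  simp only [omegaR_eq_sum_omegaSummand, ← mul_sum]
  rw [sum_comm, sum_congr rfl fun k hk => sum_omegaSummand_snoc_snoc hk g a, ← sum_mul,
    mul_comm _ ((r : ℝ) / 2), ← mul_assoc, ← zpow_add_one₀ hr0, sub_add_cancel]

theorem stmt_3 (r : ℕ) (hr : 2 ≤ r) (g : ℤ) (hg : 1 ≤ g) (n : ℕ) (hn : 1 ≤ n)
    (hstab : 0 < 2 * (g - 1) - 2 + ((n : ℤ) + 2)) (a : Fin n → ℕ)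
    (ha : ∀ i, a i ≤ r - 2) :
    omegaR r g n a =
      ∑ b ∈ Finset.range (r - 1),
        omegaR r (g - 1) (n + 2) (Fin.snoc (Fin.snoc a b) (r - 2 - b)) :=
  stmt_3_general r hr g n a
end

section
/- Fix an integer r ≥ 2 and define ω_{g,n}(a_1, …, a_n) = (r/2)^{g−1} Σ_{k=1}^{r−1} (−1)^{(k−1)(g−1)} ∏_{i=1}^n sin((a_i+1)kπ/r) / sin(kπ/r)^{2g−2+n} for 2g−2+n > 0 and a_i ∈ {0, …, r−2}. Then for all g_1, g_2, n_1, n_2 with 2g_i−2+(n_i+1) > 0 and 2(g_1+g_2)−2+(n_1+n_2) > 0: ω_{g_1+g_2, n_1+n_2}(a_1, …, a_{n_1}, b_1, …, b_{n_2}) = Σ_{a=0}^{r−2} ω_{g_1, n_1+1}(a_1, …, a_{n_1}, a) · ω_{g_2, n_2+1}(b_1, …, b_{n_2}, r−2−a). -/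
open Real Finset

private lemma cos_int_pi (t : ℤ) : Real.cos (t * π) = (-1 : ℝ) ^ t := by
  rcases Int.even_or_odd t with ⟨m, hm⟩ | ⟨m, hm⟩
  · subst hm
    have h1 : ((m + m : ℤ) : ℝ) * π = (m : ℝ) * (2 * π) := by push_cast; ring
    rw [h1]
    have h2 : ((m : ℝ)) * (2 * π) = ((m : ℤ) : ℝ) * (2 * π) := by norm_num
    rw [h2, Real.cos_int_mul_two_pi]
    rw [show m + m = 2 * m by ring, zpow_mul]
    norm_num
  · subst hm
    have h1 : ((2 * m + 1 : ℤ) : ℝ) * π = ((m : ℤ) : ℝ) * (2 * π) + π := by push_cast; ring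
    rw [h1, Real.cos_int_mul_two_pi_add_pi,
      zpow_add₀ (by norm_num : (-1 : ℝ) ≠ 0), zpow_mul]
    norm_num

private lemma cos_sum (r : ℕ) (hr : 2 ≤ r) (t : ℤ) (ht0 : t ≠ 0) (ht : |t| < 2 * r) :
    ∑ m ∈ Finset.range r, Real.cos (m * t * π / r) = if Even t then 0 else 1 := by
  have hr0 : (0 : ℝ) < r := by exact_mod_cast Nat.pos_of_ne_zero (by omega)
  have hrne : (r : ℝ) ≠ 0 := ne_of_gt hr0
  set θ : ℝ := t * π / r with hθ
  have hsne : Real.sin (θ / 2) ≠ 0 := by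
    intro h
    rw [Real.sin_eq_zero_iff] at h
    obtain ⟨n, hn⟩ := h
    have h2 : (t : ℝ) * π = (2 * r * n : ℝ) * π := by
      rw [show (2 * (r : ℝ) * n) * π = 2 * r * ((n : ℝ) * π) by ring, hn, hθ]
      field_simp
    have h3 : (t : ℝ) = (2 * (r : ℤ) * n : ℤ) := by
      have := mul_right_cancel₀ Real.pi_ne_zero h2
      push_cast
      push_cast at this
      linarith
    have h4 : t = 2 * (r : ℤ) * n := by exact_mod_cast h3
    rcases eq_or_ne n 0 with hn0 | hn0
    · subst hn0
      simp at h4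
      exact ht0 h4
    · have h5 : 1 ≤ |n| := Int.one_le_abs hn0
      have h6 : |t| = 2 * (r : ℤ) * |n| := by
        rw [h4, abs_mul, abs_of_nonneg (by positivity : (0:ℤ) ≤ 2 * (r:ℤ))]
      have h7 : 2 * (r : ℤ) * 1 ≤ 2 * (r : ℤ) * |n| :=
        mul_le_mul_of_nonneg_left h5 (by positivity)
      omega
  have harg : ∀ m : ℕ, (m : ℝ) * t * π / r = m * θ := fun m => by rw [hθ]; ring
  have tel : ∀ m : ℕ, 2 * Real.sin (θ / 2) * Real.cos (m * θ)
      = Real.sin (((m : ℝ) + 1) * θ - θ / 2) - Real.sin (m * θ - θ / 2) := by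
    intro m
    rw [Real.sin_sub_sin]
    have e1 : (((m : ℝ) + 1) * θ - θ / 2 - ((m : ℝ) * θ - θ / 2)) / 2 = θ / 2 := by ring
    have e2 : (((m : ℝ) + 1) * θ - θ / 2 + ((m : ℝ) * θ - θ / 2)) / 2 = (m : ℝ) * θ := by ring
    rw [e1, e2]
  have sum_tel : ∑ m ∈ Finset.range r, (2 * Real.sin (θ / 2) * Real.cos (m * θ))
      = Real.sin ((r : ℝ) * θ - θ / 2) - Real.sin ((0 : ℝ) * θ - θ / 2) := by
    have h := Finset.sum_range_sub (fun m : ℕ => Real.sin (m * θ - θ / 2)) r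
    calc ∑ m ∈ Finset.range r, (2 * Real.sin (θ / 2) * Real.cos (m * θ))
        = ∑ m ∈ Finset.range r,
            (Real.sin (((m : ℝ) + 1) * θ - θ / 2) - Real.sin (m * θ - θ / 2)) :=
          Finset.sum_congr rfl fun m _ => tel m
      _ = _ := by
          simp only [Nat.cast_add, Nat.cast_one] at h
          simpa using h
  have hrθ : (r : ℝ) * θ = t * π := by rw [hθ]; field_simp
  have hflip : Real.sin ((t : ℝ) * π - θ / 2) = -(-1 : ℝ) ^ t * Real.sin (θ / 2) := by
    rw [Real.sin_sub, Real.sin_int_mul_pi, cos_int_pi]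
    ring
  have key : 2 * Real.sin (θ / 2) * (∑ m ∈ Finset.range r, Real.cos (m * θ))
      = (1 - (-1 : ℝ) ^ t) * Real.sin (θ / 2) := by
    rw [Finset.mul_sum, sum_tel, hrθ, hflip]
    rw [show (0 : ℝ) * θ - θ / 2 = -(θ / 2) by ring, Real.sin_neg]
    ring
  have target : 2 * Real.sin (θ / 2) * (if Even t then (0 : ℝ) else 1)
      = (1 - (-1 : ℝ) ^ t) * Real.sin (θ / 2) := by
    by_cases he : Even t
    · rw [if_pos he, he.neg_one_zpow]; ring
    · rw [if_neg he, (Int.not_even_iff_odd.mp he).neg_one_zpow]; ring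
  have h2sne : (2 : ℝ) * Real.sin (θ / 2) ≠ 0 := mul_ne_zero two_ne_zero hsne
  have := mul_left_cancel₀ h2sne (key.trans target.symm)
  calc ∑ m ∈ Finset.range r, Real.cos (m * t * π / r)
      = ∑ m ∈ Finset.range r, Real.cos (m * θ) :=
        Finset.sum_congr rfl fun m _ => by rw [harg]
    _ = _ := this

private lemma ortho (r : ℕ) (hr : 2 ≤ r) (k k' : ℕ)
    (hk1 : 1 ≤ k) (hk2 : k ≤ r - 1) (hk'1 : 1 ≤ k') (hk'2 : k' ≤ r - 1) :
    ∑ m ∈ Finset.range r, Real.sin (m * k * π / r) * Real.sin (m * k' * π / r)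
      = if k = k' then (r : ℝ) / 2 else 0 := by
  have hr0 : (0 : ℝ) < r := by exact_mod_cast Nat.pos_of_ne_zero (by omega)
  have hrne : (r : ℝ) ≠ 0 := ne_of_gt hr0
  have hterm : ∀ m : ℕ, Real.sin (m * k * π / r) * Real.sin (m * k' * π / r)
      = (Real.cos ((m : ℝ) * ((k : ℝ) - k') * π / r)
          - Real.cos ((m : ℝ) * ((k : ℝ) + k') * π / r)) / 2 := by
    intro m
    rw [Real.cos_sub_cos]
    have e1 : ((m : ℝ) * ((k : ℝ) - k') * π / r
        + (m : ℝ) * ((k : ℝ) + k') * π / r) / 2 = (m : ℝ) * k * π / r := by ring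
    have e2 : ((m : ℝ) * ((k : ℝ) - k') * π / r
        - (m : ℝ) * ((k : ℝ) + k') * π / r) / 2 = -((m : ℝ) * k' * π / r) := by ring
    rw [e1, e2, Real.sin_neg]
    ring
  rw [Finset.sum_congr rfl fun m _ => hterm m]
  rw [← Finset.sum_div, Finset.sum_sub_distrib]
  by_cases hkk : k = k'
  · subst hkk
    have h1 : ∑ m ∈ Finset.range r, Real.cos ((m : ℝ) * ((k : ℝ) - k) * π / r)
        = (r : ℝ) := by
      have hone : ∀ m : ℕ, Real.cos ((m : ℝ) * ((k : ℝ) - k) * π / r) = 1 := by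
        intro m
        rw [show (m : ℝ) * ((k : ℝ) - k) * π / r = 0 by ring, Real.cos_zero]
      rw [Finset.sum_congr rfl fun m _ => hone m]
      simp
    have h2 : ∑ m ∈ Finset.range r, Real.cos ((m : ℝ) * ((k : ℝ) + k) * π / r) = 0 := by
      have hc := cos_sum r hr ((k : ℤ) + k) (by omega)
        (by rw [abs_of_nonneg (by omega : (0:ℤ) ≤ (k:ℤ) + k)]; omega)
      simp only [show Even ((k:ℤ) + k) from ⟨k, rfl⟩, if_true] at hc
      push_cast at hc
      rw [← hc]
    rw [h1, h2, if_pos rfl]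
    ring
  · have ht1 : ((k : ℤ) - k') ≠ 0 := by
      intro h; exact hkk (by omega)
    have ht1' : |(k : ℤ) - k'| < 2 * r := by
      rw [abs_lt]; omega
    have ht2 : ((k : ℤ) + k') ≠ 0 := by omega
    have ht2' : |(k : ℤ) + k'| < 2 * r := by
      rw [abs_of_nonneg (by omega : (0:ℤ) ≤ (k:ℤ) + k')]; omega
    have hc1 := cos_sum r hr ((k : ℤ) - k') ht1 ht1'
    have hc2 := cos_sum r hr ((k : ℤ) + k') ht2 ht2'
    have heq : (if Even ((k : ℤ) - k') then (0:ℝ) else 1)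
        = (if Even ((k : ℤ) + k') then (0:ℝ) else 1) := by
      have hiff : Even ((k : ℤ) - k') ↔ Even ((k : ℤ) + k') := by
        rw [Int.even_sub, Int.even_add]
      by_cases h : Even ((k : ℤ) - k')
      · rw [if_pos h, if_pos (hiff.mp h)]
      · rw [if_neg h, if_neg (fun hh => h (hiff.mpr hh))]
    rw [heq] at hc1
    push_cast at hc1 hc2
    rw [if_neg hkk, hc1, hc2]
    ring

private lemma csum (r : ℕ) (hr : 2 ≤ r) (k k' : ℕ)
    (hk1 : 1 ≤ k) (hk2 : k ≤ r - 1) (hk'1 : 1 ≤ k') (hk'2 : k' ≤ r - 1) :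
    ∑ c ∈ Finset.range (r - 1),
        Real.sin (((c : ℝ) + 1) * k * π / r)
          * Real.sin ((((r - 2 - c : ℕ) : ℝ) + 1) * k' * π / r)
      = (-1 : ℝ) ^ (k' + 1) * (if k = k' then (r : ℝ) / 2 else 0) := by
  have hr0 : (0 : ℝ) < r := by exact_mod_cast Nat.pos_of_ne_zero (by omega)
  have hrne : (r : ℝ) ≠ 0 := ne_of_gt hr0
  have step : ∀ c ∈ Finset.range (r - 1),
      Real.sin (((c : ℝ) + 1) * k * π / r)
          * Real.sin ((((r - 2 - c : ℕ) : ℝ) + 1) * k' * π / r)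
        = (-1 : ℝ) ^ (k' + 1)
            * (Real.sin (((c : ℝ) + 1) * k * π / r)
                * Real.sin (((c : ℝ) + 1) * k' * π / r)) := by
    intro c hc
    rw [Finset.mem_range] at hc
    have hc' : c ≤ r - 2 := by omega
    have hcast : ((r - 2 - c : ℕ) : ℝ) = (r : ℝ) - 2 - c := by
      have h1 : (r - 2 - c : ℕ) = r - (2 + c) := by omega
      rw [h1, Nat.cast_sub (by omega : 2 + c ≤ r)]
      push_cast
      ring
    have harg : (((r - 2 - c : ℕ) : ℝ) + 1) * k' * π / r
        = (k' : ℝ) * π - ((c : ℝ) + 1) * k' * π / r := by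
      rw [hcast]
      field_simp
      ring
    have flip : Real.sin ((k' : ℝ) * π - ((c : ℝ) + 1) * k' * π / r)
        = (-1 : ℝ) ^ (k' + 1) * Real.sin (((c : ℝ) + 1) * k' * π / r) := by
      rw [Real.sin_sub, Real.sin_nat_mul_pi]
      have hck : Real.cos ((k' : ℝ) * π) = (-1 : ℝ) ^ k' := by
        simpa using Real.cos_nat_mul_pi_sub 0 k'
      rw [hck, pow_succ]
      ring
    rw [harg, flip]
    ring
  rw [Finset.sum_congr rfl step, ← Finset.mul_sum]
  congr 1
  have h0 := Finset.sum_range_succ'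
    (fun m : ℕ => Real.sin ((m : ℝ) * k * π / r) * Real.sin ((m : ℝ) * k' * π / r)) (r - 1)
  rw [show r - 1 + 1 = r by omega] at h0
  rw [ortho r hr k k' hk1 hk2 hk'1 hk'2] at h0
  simp only [Nat.cast_add, Nat.cast_one, Nat.cast_zero, zero_mul, zero_div,
    Real.sin_zero, mul_zero, add_zero, zero_add] at h0
  rw [← h0]

private noncomputable def PR {n : ℕ} (r : ℕ) (a : Fin n → ℕ) (k : ℕ) : ℝ :=
  ∏ i, Real.sin ((a i + 1) * k * π / r)

private noncomputable def SP (r : ℕ) (E : ℤ) (k : ℕ) : ℝ :=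
  Real.sin (k * π / r) ^ E

private lemma omega_snoc (r : ℕ) (g : ℤ) (n : ℕ) (a : Fin n → ℕ) (c : ℕ) :
    omegaR r g (n + 1) (Fin.snoc a c) = ((r : ℝ) / 2) ^ (g - 1) *
      ∑ k ∈ Finset.Icc 1 (r - 1),
        (-1 : ℝ) ^ (((k : ℤ) - 1) * (g - 1)) *
          (PR r a k * Real.sin (((c : ℝ) + 1) * k * π / r))
            / SP r (2 * g - 2 + ((n : ℤ) + 1)) k := by
  unfold omegaR PR SP
  rw [show ((n + 1 : ℕ) : ℤ) = (n : ℤ) + 1 by push_cast; ring]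
  refine congrArg _ (Finset.sum_congr rfl fun k _ => ?_)
  rw [Fin.prod_univ_castSucc]
  simp only [Fin.snoc_castSucc, Fin.snoc_last]

private lemma omega_append {n₁ n₂ : ℕ} (r : ℕ) (g : ℤ) (a : Fin n₁ → ℕ) (b : Fin n₂ → ℕ) :
    omegaR r g (n₁ + n₂) (Fin.append a b) = ((r : ℝ) / 2) ^ (g - 1) *
      ∑ k ∈ Finset.Icc 1 (r - 1),
        (-1 : ℝ) ^ (((k : ℤ) - 1) * (g - 1)) * (PR r a k * PR r b k)
          / SP r (2 * g - 2 + ((n₁ : ℤ) + n₂)) k := by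
  unfold omegaR PR SP
  rw [show ((n₁ + n₂ : ℕ) : ℤ) = (n₁ : ℤ) + n₂ by push_cast; ring]
  refine congrArg _ (Finset.sum_congr rfl fun k _ => ?_)
  rw [Fin.prod_univ_add]
  simp only [Fin.append_left, Fin.append_right]

theorem stmt_4 (r : ℕ) (hr : 2 ≤ r) (g₁ g₂ : ℤ) (hg₁ : 0 ≤ g₁) (hg₂ : 0 ≤ g₂)
    (n₁ n₂ : ℕ)
    (hstab₁ : 0 < 2 * g₁ - 2 + ((n₁ : ℤ) + 1))
    (hstab₂ : 0 < 2 * g₂ - 2 + ((n₂ : ℤ) + 1))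
    (hstab : 0 < 2 * (g₁ + g₂) - 2 + ((n₁ : ℤ) + n₂))
    (a : Fin n₁ → ℕ) (b : Fin n₂ → ℕ)
    (ha : ∀ i, a i ≤ r - 2) (hb : ∀ i, b i ≤ r - 2) :
    omegaR r (g₁ + g₂) (n₁ + n₂) (Fin.append a b) =
      ∑ c ∈ Finset.range (r - 1),
        omegaR r g₁ (n₁ + 1) (Fin.snoc a c) *
          omegaR r g₂ (n₂ + 1) (Fin.snoc b (r - 2 - c)) := by
  rw [omega_append r (g₁ + g₂) a b]
  simp only [omega_snoc]
  symm
  have hrne : (r : ℝ) ≠ 0 := Nat.cast_ne_zero.mpr (by omega)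
  have hr0 : (0 : ℝ) < r := Nat.cast_pos.mpr (by omega)
  have hCne : ((r : ℝ) / 2) ≠ 0 := by positivity
  have hneg : (-1 : ℝ) ≠ 0 := by norm_num
  have hsne : ∀ k ∈ Finset.Icc 1 (r - 1), Real.sin ((k : ℝ) * π / r) ≠ 0 := by
    intro k hk
    rw [Finset.mem_Icc] at hk
    have hk0 : (0 : ℝ) < k := Nat.cast_pos.mpr (by omega)
    have hkr : (k : ℝ) < r := Nat.cast_lt.mpr (by omega)
    have h1 : 0 < (k : ℝ) * π / r := by positivity
    have h2 : (k : ℝ) * π / r < π := by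
      rw [div_lt_iff₀ hr0]
      nlinarith [Real.pi_pos]
    exact ne_of_gt (Real.sin_pos_of_pos_of_lt_pi h1 h2)
  calc ∑ c ∈ Finset.range (r - 1),
      (((r : ℝ) / 2) ^ (g₁ - 1) *
          ∑ k ∈ Finset.Icc 1 (r - 1),
            (-1 : ℝ) ^ (((k : ℤ) - 1) * (g₁ - 1)) *
                (PR r a k * Real.sin (((c : ℝ) + 1) * k * π / r)) /
              SP r (2 * g₁ - 2 + ((n₁ : ℤ) + 1)) k) *
        (((r : ℝ) / 2) ^ (g₂ - 1) *
          ∑ k ∈ Finset.Icc 1 (r - 1),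
            (-1 : ℝ) ^ (((k : ℤ) - 1) * (g₂ - 1)) *
                (PR r b k * Real.sin ((((r - 2 - c : ℕ) : ℝ) + 1) * k * π / r)) /
              SP r (2 * g₂ - 2 + ((n₂ : ℤ) + 1)) k)
      = (((r : ℝ) / 2) ^ (g₁ - 1) * ((r : ℝ) / 2) ^ (g₂ - 1)) *
          ∑ c ∈ Finset.range (r - 1), ∑ k ∈ Finset.Icc 1 (r - 1), ∑ k' ∈ Finset.Icc 1 (r - 1),
            ((-1 : ℝ) ^ (((k : ℤ) - 1) * (g₁ - 1)) *
                (PR r a k * Real.sin (((c : ℝ) + 1) * k * π / r)) /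
              SP r (2 * g₁ - 2 + ((n₁ : ℤ) + 1)) k) *
            ((-1 : ℝ) ^ (((k' : ℤ) - 1) * (g₂ - 1)) *
                (PR r b k' * Real.sin ((((r - 2 - c : ℕ) : ℝ) + 1) * k' * π / r)) /
              SP r (2 * g₂ - 2 + ((n₂ : ℤ) + 1)) k') := by
        rw [Finset.mul_sum]
        refine Finset.sum_congr rfl fun c _ => ?_
        rw [mul_mul_mul_comm, Finset.sum_mul_sum]
    _ = (((r : ℝ) / 2) ^ (g₁ - 1) * ((r : ℝ) / 2) ^ (g₂ - 1)) *
          ∑ k ∈ Finset.Icc 1 (r - 1), ∑ k' ∈ Finset.Icc 1 (r - 1), ∑ c ∈ Finset.range (r - 1),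
            ((-1 : ℝ) ^ (((k : ℤ) - 1) * (g₁ - 1)) *
                (PR r a k * Real.sin (((c : ℝ) + 1) * k * π / r)) /
              SP r (2 * g₁ - 2 + ((n₁ : ℤ) + 1)) k) *
            ((-1 : ℝ) ^ (((k' : ℤ) - 1) * (g₂ - 1)) *
                (PR r b k' * Real.sin ((((r - 2 - c : ℕ) : ℝ) + 1) * k' * π / r)) /
              SP r (2 * g₂ - 2 + ((n₂ : ℤ) + 1)) k') := by
        congr 1
        rw [Finset.sum_comm]
        exact Finset.sum_congr rfl fun k _ => Finset.sum_comm
    _ = (((r : ℝ) / 2) ^ (g₁ - 1) * ((r : ℝ) / 2) ^ (g₂ - 1)) *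
          ∑ k ∈ Finset.Icc 1 (r - 1), ∑ k' ∈ Finset.Icc 1 (r - 1),
            ((-1 : ℝ) ^ (((k : ℤ) - 1) * (g₁ - 1)) * (-1 : ℝ) ^ (((k' : ℤ) - 1) * (g₂ - 1)) *
                PR r a k * PR r b k' /
                (SP r (2 * g₁ - 2 + ((n₁ : ℤ) + 1)) k * SP r (2 * g₂ - 2 + ((n₂ : ℤ) + 1)) k')) *
              ((-1 : ℝ) ^ (k' + 1) * (if k = k' then (r : ℝ) / 2 else 0)) := by
        congr 1
        refine Finset.sum_congr rfl fun k hk => Finset.sum_congr rfl fun k' hk' => ?_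
        rw [Finset.mem_Icc] at hk hk'
        rw [← csum r hr k k' hk.1 hk.2 hk'.1 hk'.2, Finset.mul_sum]
        exact Finset.sum_congr rfl fun c _ => by ring
    _ = (((r : ℝ) / 2) ^ (g₁ - 1) * ((r : ℝ) / 2) ^ (g₂ - 1)) *
          ∑ k ∈ Finset.Icc 1 (r - 1),
            ((-1 : ℝ) ^ (((k : ℤ) - 1) * (g₁ - 1)) * (-1 : ℝ) ^ (((k : ℤ) - 1) * (g₂ - 1)) *
                PR r a k * PR r b k /
                (SP r (2 * g₁ - 2 + ((n₁ : ℤ) + 1)) k * SP r (2 * g₂ - 2 + ((n₂ : ℤ) + 1)) k)) *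
              ((-1 : ℝ) ^ (k + 1) * ((r : ℝ) / 2)) := by
        congr 1
        refine Finset.sum_congr rfl fun k hk => ?_
        simp only [mul_ite, mul_zero]
        rw [Finset.sum_ite_eq, if_pos hk]
    _ = ((r : ℝ) / 2) ^ (g₁ + g₂ - 1) *
          ∑ k ∈ Finset.Icc 1 (r - 1),
            (-1 : ℝ) ^ (((k : ℤ) - 1) * (g₁ + g₂ - 1)) * (PR r a k * PR r b k) /
              SP r (2 * (g₁ + g₂) - 2 + ((n₁ : ℤ) + n₂)) k := by
        rw [Finset.mul_sum, Finset.mul_sum]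
        refine Finset.sum_congr rfl fun k hk => ?_
        have hsk := hsne k hk
        have h1 : SP r (2 * g₁ - 2 + ((n₁ : ℤ) + 1)) k * SP r (2 * g₂ - 2 + ((n₂ : ℤ) + 1)) k
            = SP r (2 * (g₁ + g₂) - 2 + ((n₁ : ℤ) + n₂)) k := by
          unfold SP
          rw [← zpow_add₀ hsk]
          congr 1
          ring
        have h2 : (-1 : ℝ) ^ (((k : ℤ) - 1) * (g₁ - 1)) * (-1 : ℝ) ^ (((k : ℤ) - 1) * (g₂ - 1)) *
            (-1 : ℝ) ^ (k + 1) = (-1 : ℝ) ^ (((k : ℤ) - 1) * (g₁ + g₂ - 1)) := by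
          rw [show ((-1 : ℝ)) ^ (k + 1) = ((-1 : ℝ)) ^ (((k : ℕ) + 1 : ℕ) : ℤ) from
            (zpow_natCast _ _).symm]
          rw [show (((k : ℕ) + 1 : ℕ) : ℤ) = (k : ℤ) + 1 by push_cast; ring]
          rw [← zpow_add₀ hneg, ← zpow_add₀ hneg]
          rw [show ((k : ℤ) - 1) * (g₁ - 1) + ((k : ℤ) - 1) * (g₂ - 1) + ((k : ℤ) + 1)
            = ((k : ℤ) - 1) * (g₁ + g₂ - 1) + 2 * 1 by ring]
          rw [zpow_add₀ hneg]
          norm_num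
        have h3 : ((r : ℝ) / 2) ^ (g₁ - 1) * ((r : ℝ) / 2) ^ (g₂ - 1) * ((r : ℝ) / 2)
            = ((r : ℝ) / 2) ^ (g₁ + g₂ - 1) := by
          rw [← zpow_add₀ hCne, ← zpow_add_one₀ hCne]
          congr 1
          ring
        calc (((r : ℝ) / 2) ^ (g₁ - 1) * ((r : ℝ) / 2) ^ (g₂ - 1)) *
              (((-1 : ℝ) ^ (((k : ℤ) - 1) * (g₁ - 1)) * (-1 : ℝ) ^ (((k : ℤ) - 1) * (g₂ - 1)) *
                  PR r a k * PR r b k /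
                  (SP r (2 * g₁ - 2 + ((n₁ : ℤ) + 1)) k * SP r (2 * g₂ - 2 + ((n₂ : ℤ) + 1)) k)) *
                ((-1 : ℝ) ^ (k + 1) * ((r : ℝ) / 2)))
            = (((r : ℝ) / 2) ^ (g₁ - 1) * ((r : ℝ) / 2) ^ (g₂ - 1) * ((r : ℝ) / 2)) *
                (((-1 : ℝ) ^ (((k : ℤ) - 1) * (g₁ - 1)) * (-1 : ℝ) ^ (((k : ℤ) - 1) * (g₂ - 1)) *
                    (-1 : ℝ) ^ (k + 1)) * (PR r a k * PR r b k) /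
                  (SP r (2 * g₁ - 2 + ((n₁ : ℤ) + 1)) k *
                    SP r (2 * g₂ - 2 + ((n₂ : ℤ) + 1)) k)) := by ring
          _ = _ := by rw [h3, h2, h1]
end
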